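/- arXiv:2402.13829 — 6 statements merged into one kernel-verified Lean document; each statement's English description precedes it below -/
import Mathlib

section
/- For every real x ≥ 0, log(1+x) ≤ (x/2)·(x+6)/(2x+3). -/
/-!
The right-hand side `g x = x (x + 6) / (2 (2 x + 3))` vanishes at `0`, and its derivative
dominates that of `log (1 + x)`, since
`g' t - (1 + t)⁻¹ = t ^ 3 / ((1 + t) (2 t + 3) ^ 2) ≥ 0` for `t ≥ 0`.
Hence `g x - log (1 + x)` is monotone on `[0, ∞)` and stays nonnegative.
-/

open Real Set

theorem log_one_add_le_of_hasDerivAt {g g' : ℝ → ℝ} (hg₀ : g 0 = 0)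
    (hg : ContinuousOn g (Ici 0)) (hg' : ∀ t, 0 < t → HasDerivAt g (g' t) t)
    (hle : ∀ t, 0 < t → (1 + t)⁻¹ ≤ g' t) {x : ℝ} (hx : 0 ≤ x) :
    log (1 + x) ≤ g x := by
  have hlog : ∀ t, 0 < t → HasDerivAt (fun t ↦ log (1 + t)) (1 + t)⁻¹ t := fun t ht ↦ by
    simpa using ((hasDerivAt_id t).const_add 1).log (by simp only [id]; linarith)
  have hmono : MonotoneOn (fun t ↦ g t - log (1 + t)) (Ici 0) := by
    refine monotoneOn_of_hasDerivWithinAt_nonneg (f' := fun t ↦ g' t - (1 + t)⁻¹) (convex_Ici 0)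
      (hg.sub (ContinuousOn.log (by fun_prop) fun t ht ↦ ?_)) (fun t ht ↦ ?_) fun t ht ↦ ?_
    · exact (add_pos_of_pos_of_nonneg one_pos ht).ne'
    · rw [interior_Ici] at ht
      exact ((hg' t ht).sub (hlog t ht)).hasDerivWithinAt
    · rw [interior_Ici] at ht
      exact sub_nonneg.2 (hle t ht)
  simpa [hg₀] using hmono self_mem_Ici hx hx

theorem hasDerivAt_mul_div_two_mul_add_three (t : ℝ) (ht : 2 * t + 3 ≠ 0) :
    HasDerivAt (fun t ↦ t / 2 * ((t + 6) / (2 * t + 3))) ((t ^ 2 + 3 * t + 9) / (2 * t + 3) ^ 2) t := by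
  have hnum : HasDerivAt (fun t : ℝ ↦ t / 2) (1 / 2) t := (hasDerivAt_id t).div_const 2
  have hden : HasDerivAt (fun t : ℝ ↦ 2 * t + 3) 2 t := by
    simpa using ((hasDerivAt_id t).const_mul 2).add_const 3
  have hquot : HasDerivAt (fun t : ℝ ↦ (t + 6) / (2 * t + 3))
      ((1 * (2 * t + 3) - (t + 6) * 2) / (2 * t + 3) ^ 2) t :=
    ((hasDerivAt_id t).add_const 6).div hden ht
  refine (hnum.mul hquot).congr_deriv ?_
  field_simp
  ring

theorem inv_one_add_le_div_sq (t : ℝ) (ht : 0 ≤ t) :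
    (1 + t)⁻¹ ≤ (t ^ 2 + 3 * t + 9) / (2 * t + 3) ^ 2 := by
  rw [inv_eq_one_div, div_le_div_iff₀ (by linarith) (by positivity)]
  nlinarith [pow_nonneg ht 3]

/-- For every real `x ≥ 0`, `log (1+x) ≤ (x/2) * (x+6)/(2x+3)`. -/
theorem log_le_half_mul_div (x : ℝ) (hx : 0 ≤ x) :
    Real.log (1 + x) ≤ (x / 2) * ((x + 6) / (2 * x + 3)) := by
  have hderiv : ∀ t : ℝ, 0 ≤ t → HasDerivAt (fun t ↦ t / 2 * ((t + 6) / (2 * t + 3)))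
      ((t ^ 2 + 3 * t + 9) / (2 * t + 3) ^ 2) t :=
    fun t ht ↦ hasDerivAt_mul_div_two_mul_add_three t (by linarith)
  exact log_one_add_le_of_hasDerivAt (by norm_num)
    (fun t ht ↦ (hderiv t ht).continuousAt.continuousWithinAt) (fun t ht ↦ hderiv t ht.le)
    (fun t ht ↦ inv_one_add_le_div_sq t ht.le) hx
end

section
/- For every integer m ≥ 3, the sum of 1/r for r from (m²−m)/2 to (m²+m)/2 − 1 is at most 2/(m−1) − 18/(13m²). -/
set_option maxHeartbeats 800000

/-- chord inequality -/
lemma chord_ineq (A B x : ℝ) (hA : 0 < A) (h1 : A ≤ x) (h2 : x ≤ B) :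
    1 / x + 1 / (A + B - x) ≤ 1 / A + 1 / B := by
  have hB : 0 < B := lt_of_lt_of_le hA (le_trans h1 h2)
  have hx : 0 < x := lt_of_lt_of_le hA h1
  have hy : 0 < A + B - x := by linarith
  rw [div_add_div _ _ hx.ne' hy.ne', div_add_div _ _ hA.ne' hB.ne',
    div_le_div_iff₀ (by positivity) (by positivity)]
  nlinarith [mul_nonneg (mul_nonneg (by linarith : (0:ℝ) ≤ A + B)
    (by linarith : (0:ℝ) ≤ x - A)) (by linarith : (0:ℝ) ≤ B - x)]

/-- For every integer `m ≥ 3`, the sum of `1/r` for `r` from `(m²−m)/2` to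
`(m²+m)/2 − 1` is at most `2/(m−1) − 18/(13 m²)`. -/
theorem sum_reciprocal_interval_le (m : ℕ) (hm : 3 ≤ m) :
    ∑ r ∈ (Finset.Icc ((m ^ 2 - m) / 2) ((m ^ 2 + m) / 2 - 1) : Finset ℕ), (1 : ℝ) / (r : ℝ) ≤
      2 / ((m : ℝ) - 1) - 18 / (13 * (m : ℝ) ^ 2) := by
  obtain ⟨k, hk⟩ := Nat.even_mul_succ_self (m - 1)
  obtain ⟨l, hl⟩ := Nat.even_mul_succ_self m
  have hsq : m ^ 2 = m * m := sq m
  have hmul1 : (m - 1) * (m - 1 + 1) = m * m - m := by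
    have h : m - 1 + 1 = m := by omega
    rw [h, Nat.sub_mul, one_mul]
  have hmul2 : m * (m + 1) = m * m + m := by ring
  have h3m : 3 * m ≤ m * m := Nat.mul_le_mul_right m hm
  rw [hmul1] at hk
  rw [hmul2] at hl
  have hka : (m ^ 2 - m) / 2 = k := by omega
  have hlb : (m ^ 2 + m) / 2 - 1 = l - 1 := by omega
  rw [hka, hlb]
  set a := k with hak
  set b := l - 1 with hbl
  have hk2 : 2 * a = m * m - m := by omega
  have hl2 : 2 * (b + 1) = m * m + m := by omega
  have hmm : m ≤ m * m := by omega
  have hA : (a : ℝ) = ((m : ℝ) ^ 2 - m) / 2 := by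
    have h : ((2 * a : ℕ) : ℝ) = ((m * m - m : ℕ) : ℝ) := by rw [hk2]
    push_cast [Nat.cast_sub hmm] at h
    nlinarith [h]
  have hB : (b : ℝ) = ((m : ℝ) ^ 2 + m - 2) / 2 := by
    have h : ((2 * (b + 1) : ℕ) : ℝ) = ((m * m + m : ℕ) : ℝ) := by rw [hl2]
    push_cast at h
    nlinarith [h]
  have hm3 : (3 : ℝ) ≤ (m : ℝ) := by exact_mod_cast hm
  have hab : a ≤ b := by omega
  have haposℕ : 0 < a := by omega
  have hApos : (0 : ℝ) < a := by exact_mod_cast haposℕ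
  have hcard : (Finset.Icc a b).card = m := by
    rw [Nat.card_Icc]; omega
  set S := ∑ r ∈ Finset.Icc a b, (1 : ℝ) / (r : ℝ) with hS
  have hrefl : S = ∑ r ∈ Finset.Icc a b, (1 : ℝ) / ((a + b - r : ℕ) : ℝ) := by
    rw [hS]
    refine Finset.sum_nbij' (fun r => a + b - r) (fun r => a + b - r) ?_ ?_ ?_ ?_ ?_
    · intro x hx; simp only [Finset.mem_Icc] at hx ⊢; omega
    · intro x hx; simp only [Finset.mem_Icc] at hx ⊢; omega
    · intro x hx; simp only [Finset.mem_Icc] at hx ⊢; omega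
    · intro x hx; simp only [Finset.mem_Icc] at hx ⊢; omega
    · intro x hx; simp only [Finset.mem_Icc] at hx
      have hx2 : a + b - (a + b - x) = x := by omega
      rw [hx2]
  have hdouble : 2 * S ≤ (m : ℝ) * (1 / (a : ℝ) + 1 / (b : ℝ)) := by
    have h2S : 2 * S = ∑ r ∈ Finset.Icc a b,
        ((1 : ℝ) / (r : ℝ) + (1 : ℝ) / ((a + b - r : ℕ) : ℝ)) := by
      rw [Finset.sum_add_distrib, ← hrefl, hS]; ring
    rw [h2S]
    calc ∑ r ∈ Finset.Icc a b, ((1 : ℝ) / (r : ℝ) + (1 : ℝ) / ((a + b - r : ℕ) : ℝ))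
        ≤ ∑ _r ∈ Finset.Icc a b, ((1 : ℝ) / (a : ℝ) + 1 / (b : ℝ)) := by
          apply Finset.sum_le_sum
          intro r hr
          simp only [Finset.mem_Icc] at hr
          have hc : ((a + b - r : ℕ) : ℝ) = (a : ℝ) + b - r := by
            have h1 : a + b - r + r = a + b := by omega
            have h2 := congrArg (fun n : ℕ => (n : ℝ)) h1
            push_cast at h2
            linarith
          rw [hc]
          exact chord_ineq _ _ _ hApos (Nat.cast_le.mpr hr.1) (Nat.cast_le.mpr hr.2)
      _ = (m : ℝ) * (1 / (a : ℝ) + 1 / (b : ℝ)) := by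
          rw [Finset.sum_const, hcard, nsmul_eq_mul]
  -- final arithmetic
  have h1 : (0:ℝ) < (m : ℝ) - 1 := by linarith
  have h2 : (0:ℝ) < (m : ℝ) ^ 2 - m := by nlinarith
  have h3 : (0:ℝ) < (m : ℝ) ^ 2 + m - 2 := by nlinarith
  have hiA : 1 / (a : ℝ) = 2 / ((m : ℝ) ^ 2 - m) := by
    rw [hA, one_div_div]
  have hiB : 1 / (b : ℝ) = 2 / ((m : ℝ) ^ 2 + m - 2) := by
    rw [hB, one_div_div]
  have hfin : (m : ℝ) * (1 / (a : ℝ) + 1 / (b : ℝ)) ≤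
      2 * (2 / ((m : ℝ) - 1) - 18 / (13 * (m : ℝ) ^ 2)) := by
    rw [hiA, hiB, div_add_div _ _ h2.ne' h3.ne',
      div_sub_div _ _ h1.ne' (by positivity : (13 * (m:ℝ)^2) ≠ 0),
      ← mul_div_assoc, ← mul_div_assoc, div_le_div_iff₀ (by positivity) (by positivity)]
    have h8 : (0:ℝ) ≤ 8 * (m:ℝ) ^ 2 - 18 * (m:ℝ) + 36 := by nlinarith [sq_nonneg ((m:ℝ) - 3)]
    have hkey : (0:ℝ) ≤ 2 * (m:ℝ) * ((m:ℝ) - 1) ^ 2 * (8 * (m:ℝ) ^ 2 - 18 * (m:ℝ) + 36) := by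
      positivity
    nlinarith [hkey]
  linarith
end

section
/- The sum over m ≥ 3 of (1/m)·(sum of 1/r for r from (m²−m)/2 to (m²+m)/2 − 1) is at most 133/52 − (18/13)·ζ(3). -/
/-!
The block `[(m² - m)/2, (m² + m)/2 - 1]` has `m` elements, each at least `(m - 1)m/2`, so the
`m`-th term is at most `2/((m - 1)m)`, and these bounds telescope. Computing the terms
`m = 3, 4, 5` exactly and bounding the rest by `∑_{m ≥ 6} 2/((m - 1)m) = 2/5` gives a sum below
`0.8821`. On the other side `n⁻³ ≤ 1/(9(n - 1)n)` for `n ≥ 9` telescopes to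
`ζ(3) ≤ ∑_{n ≤ 8} n⁻³ + 1/72 < 1.21`, which puts the right-hand side above `0.8823`.
-/

open Filter Topology Finset

theorem hasSum_sub_succ_of_antitone {f : ℕ → ℝ} (hf : Antitone f)
    (hlim : Tendsto f atTop (𝓝 0)) : HasSum (fun n ↦ f n - f (n + 1)) (f 0) := by
  refine (hasSum_iff_tendsto_nat_of_nonneg (fun n ↦ sub_nonneg.2 (hf n.le_succ)) _).2 ?_
  simp_rw [sum_range_sub']
  simpa using tendsto_const_nhds.sub hlim

theorem hasSum_one_div_add_mul_add_add_one {c : ℝ} (hc : 0 < c) :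
    HasSum (fun n : ℕ ↦ 1 / ((n + c) * (n + c + 1))) (1 / c) := by
  have hlim : Tendsto (fun n : ℕ ↦ 1 / ((n : ℝ) + c)) atTop (𝓝 0) := by
    simp_rw [one_div]
    exact (tendsto_atTop_add_const_right _ c tendsto_natCast_atTop_atTop).inv_tendsto_atTop
  have hanti : Antitone fun n : ℕ ↦ 1 / ((n : ℝ) + c) := fun m n hmn ↦
    one_div_le_one_div_of_le (by positivity) (by gcongr)
  convert hasSum_sub_succ_of_antitone hanti hlim using 1
  · funext n
    push_cast
    field_simp
    ring
  · simp

theorem tsum_one_div_nat_add_add_one_pow_three_le {N : ℕ} (hN : 1 ≤ N) :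
    ∑' n : ℕ, 1 / (((n + N : ℕ) : ℝ) + 1) ^ 3 ≤ 1 / ((N : ℝ) + 1) * (1 / N) := by
  have hN' : (1 : ℝ) ≤ N := by exact_mod_cast hN
  have hmajor := (hasSum_one_div_add_mul_add_add_one (by positivity : (0 : ℝ) < N)).mul_left
    (1 / ((N : ℝ) + 1))
  have hle : ∀ n : ℕ,
      1 / (((n + N : ℕ) : ℝ) + 1) ^ 3 ≤ 1 / (N + 1) * (1 / ((n + N) * (n + N + 1))) := by
    intro n
    push_cast
    have hn : (0 : ℝ) ≤ n := n.cast_nonneg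
    rw [one_div_mul_one_div, one_div_le_one_div (by positivity) (by positivity)]
    have : ((N : ℝ) + 1) * (n + N) ≤ (n + N + 1) ^ 2 := by nlinarith
    nlinarith
  exact hasSum_le hle (Summable.of_nonneg_of_le (fun _ ↦ by positivity) hle hmajor.summable).hasSum
    hmajor

theorem tsum_one_div_nat_add_one_pow_three_le : ∑' n : ℕ, 1 / ((n : ℝ) + 1) ^ 3 ≤ 121 / 100 := by
  have hsum : Summable fun n : ℕ ↦ 1 / ((n : ℝ) + 1) ^ 3 := by
    simpa using (summable_nat_add_iff 1).2 (Real.summable_one_div_nat_pow.2 (by norm_num : 1 < 3))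
  rw [← hsum.sum_add_tsum_nat_add 8]
  have htail := tsum_one_div_nat_add_add_one_pow_three_le (N := 8) (by norm_num)
  norm_num [sum_range_succ] at htail ⊢
  linarith

noncomputable def weightedIntervalSum (m : ℕ) : ℝ :=
  1 / m * ∑ r ∈ Icc ((m ^ 2 - m) / 2) ((m ^ 2 + m) / 2 - 1 : ℕ), (1 : ℝ) / r

theorem card_Icc_sq_sub_div_two {m : ℕ} (hm : 1 ≤ m) :
    #(Icc ((m ^ 2 - m) / 2) ((m ^ 2 + m) / 2 - 1)) = m := by
  have h : (m ^ 2 + m) / 2 = (m ^ 2 - m) / 2 + m := by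
    rw [← Nat.add_mul_div_left _ _ two_pos]
    have : m ≤ m ^ 2 := Nat.le_self_pow two_ne_zero m
    congr 1
    omega
  rw [Nat.card_Icc, h]
  omega

theorem pred_mul_le_two_mul_of_sq_sub_div_two_le {m r : ℕ} (hr : (m ^ 2 - m) / 2 ≤ r) :
    (m - 1) * m ≤ 2 * r := by
  have h : m ^ 2 - m = m * (m - 1) := by rw [sq, Nat.mul_sub_one]
  rw [h] at hr
  have := Nat.two_mul_div_two_of_even (Nat.even_mul_pred_self m)
  rw [mul_comm (m - 1)]
  omega

theorem weightedIntervalSum_nonneg (m : ℕ) : 0 ≤ weightedIntervalSum m :=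
  mul_nonneg (by positivity) (sum_nonneg fun _ _ ↦ by positivity)

theorem weightedIntervalSum_le {m : ℕ} (hm : 2 ≤ m) :
    weightedIntervalSum m ≤ 2 / (((m : ℝ) - 1) * m) := by
  have hm' : (2 : ℝ) ≤ m := by exact_mod_cast hm
  have hterm : ∀ r ∈ Icc ((m ^ 2 - m) / 2) ((m ^ 2 + m) / 2 - 1 : ℕ),
      (1 : ℝ) / r ≤ 2 / (((m : ℝ) - 1) * m) := by
    intro r hr
    have hle : (((m - 1 : ℕ) * m : ℕ) : ℝ) ≤ ((2 * r : ℕ) : ℝ) :=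
      Nat.cast_le.2 (pred_mul_le_two_mul_of_sq_sub_div_two_le (mem_Icc.1 hr).1)
    push_cast [Nat.cast_sub (by omega : 1 ≤ m)] at hle
    rw [div_le_div_iff₀ (by nlinarith) (by nlinarith)]
    linarith
  calc weightedIntervalSum m
      ≤ 1 / m * (#(Icc ((m ^ 2 - m) / 2) ((m ^ 2 + m) / 2 - 1)) • (2 / (((m : ℝ) - 1) * m))) :=
        mul_le_mul_of_nonneg_left (sum_le_card_nsmul _ _ _ hterm) (by positivity)
    _ = 2 / (((m : ℝ) - 1) * m) := by
        rw [card_Icc_sq_sub_div_two (by omega), nsmul_eq_mul]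
        field_simp

theorem weightedIntervalSum_nat_add_le {k : ℕ} (hk : 2 ≤ k) (i : ℕ) :
    weightedIntervalSum (i + k) ≤ 2 * (1 / ((i + ((k : ℝ) - 1)) * (i + ((k : ℝ) - 1) + 1))) := by
  refine (weightedIntervalSum_le (by omega)).trans_eq ?_
  push_cast
  ring

theorem summable_weightedIntervalSum : Summable weightedIntervalSum := by
  have hmajor := (hasSum_one_div_add_mul_add_add_one (c := (2 : ℕ) - 1) (by norm_num)).mul_left 2
  exact (summable_nat_add_iff 2).1 <| Summable.of_nonneg_of_le
    (fun _ ↦ weightedIntervalSum_nonneg _) (weightedIntervalSum_nat_add_le le_rfl) hmajor.summable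

theorem tsum_weightedIntervalSum_nat_add_le {k : ℕ} (hk : 2 ≤ k) :
    ∑' i, weightedIntervalSum (i + k) ≤ 2 / ((k : ℝ) - 1) := by
  have hk' : (0 : ℝ) < k - 1 := by
    have : (2 : ℝ) ≤ k := by exact_mod_cast hk
    linarith
  have hmajor := (hasSum_one_div_add_mul_add_add_one hk').mul_left 2
  have hsum := (summable_nat_add_iff k).2 summable_weightedIntervalSum
  exact (hasSum_le (weightedIntervalSum_nat_add_le hk) hsum.hasSum hmajor).trans_eq (by ring)

/-- The sum over `m ≥ 3` of `(1/m) · Σ_{r = (m²−m)/2}^{(m²+m)/2 − 1} 1/r` is at most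
`133/52 − (18/13)·ζ(3)`, where `ζ(3) = Σ_{n ≥ 1} 1/n³`. -/
theorem tsum_weighted_interval_sums_le :
    ∑' m : ℕ, (1 : ℝ) / (m + 3) *
        ∑ r ∈ (Finset.Icc (((m + 3) ^ 2 - (m + 3)) / 2) (((m + 3) ^ 2 + (m + 3)) / 2 - 1) : Finset ℕ),
          (1 : ℝ) / (r : ℝ) ≤
      133 / 52 - (18 / 13) * ∑' n : ℕ, 1 / ((n : ℝ) + 1) ^ 3 := by
  have hsum : Summable fun m ↦ weightedIntervalSum (m + 3) :=
    (summable_nat_add_iff 3).2 summable_weightedIntervalSum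
  have hhead :
      ∑ i ∈ range 3, weightedIntervalSum (i + 3) = 47 / 180 + 275 / 2016 + 25381 / 300300 := by
    norm_num [sum_range_succ, weightedIntervalSum, sum_Icc_succ_top]
  have htail : ∑' i, weightedIntervalSum (i + 6) ≤ 2 / 5 := by
    convert tsum_weightedIntervalSum_nat_add_le (k := 6) (by norm_num) using 1
    norm_num
  calc _ = ∑' m, weightedIntervalSum (m + 3) := by
        simp only [weightedIntervalSum, Nat.cast_add, Nat.cast_ofNat]
    _ = ∑ i ∈ range 3, weightedIntervalSum (i + 3) + ∑' i, weightedIntervalSum (i + 6) :=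
        (hsum.sum_add_tsum_nat_add 3).symm
    _ ≤ 133 / 52 - 18 / 13 * (121 / 100) := by rw [hhead]; linarith
    _ ≤ _ := by gcongr; exact tsum_one_div_nat_add_one_pow_three_le
end

section
/- For any prime p and real q ≥ 3 with p ≤ q, the sum of 1/(m·p^m) over integers m ≥ 3 with p^m > q² is less than 1/q². -/
/-- For any prime `p` and real `q ≥ 3` with `p ≤ q`, the sum of `1/(m·p^m)` over
integers `m ≥ 3` with `p^m > q²` is less than `1/q²`. -/
theorem tsum_small_prime_large_powers_lt (p : ℕ) (hp : p.Prime) (q : ℝ) (hq : 3 ≤ q)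
    (hpq : (p : ℝ) ≤ q) :
    (∑' m : ℕ, if 3 ≤ m ∧ q ^ 2 < (p : ℝ) ^ m then 1 / ((m : ℝ) * (p : ℝ) ^ m) else 0) <
      1 / q ^ 2 := by
  classical
  have hp2 : (2:ℝ) ≤ (p:ℝ) := by exact_mod_cast hp.two_le
  have hp1 : (1:ℝ) < (p:ℝ) := by linarith
  have hp0 : (0:ℝ) < (p:ℝ) := by linarith
  have hq0 : (0:ℝ) < q := by linarith
  have hex : ∃ n : ℕ, q ^ 2 < (p:ℝ) ^ n := pow_unbounded_of_one_lt (q ^ 2) hp1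
  set m₀ := Nat.find hex with hm₀def
  have hm₀ : q ^ 2 < (p:ℝ) ^ m₀ := Nat.find_spec hex
  have hmin : ∀ k, k < m₀ → ¬ q ^ 2 < (p:ℝ) ^ k := fun k hk => Nat.find_min hex hk
  have h3 : 3 ≤ m₀ := by
    by_contra h
    push_neg at h
    have hle : m₀ ≤ 2 := by omega
    have h1 : (p:ℝ) ^ m₀ ≤ (p:ℝ) ^ 2 := pow_le_pow_right₀ hp1.le hle
    have h2 : (p:ℝ) ^ 2 ≤ q ^ 2 := pow_le_pow_left₀ hp0.le hpq 2
    linarith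
  have hcond : ∀ m : ℕ, (3 ≤ m ∧ q ^ 2 < (p:ℝ) ^ m) ↔ m₀ ≤ m := by
    intro m
    constructor
    · intro h; exact Nat.find_le h.2
    · intro h
      refine ⟨le_trans h3 h, lt_of_lt_of_le hm₀ (pow_le_pow_right₀ hp1.le h)⟩
  set P : ℝ := (p:ℝ) ^ m₀ with hPdef
  have hP0 : 0 < P := by positivity
  set c : ℝ := 1 / (3 * P) with hcdef
  have hc0 : 0 < c := by positivity
  set g : ℕ → ℝ := fun m => if m₀ ≤ m then c * (1/2:ℝ) ^ (m - m₀) else 0 with hgdef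
  have hg' : ∀ n : ℕ, g (n + m₀) = c * (1/2:ℝ) ^ n := by
    intro n
    simp [hgdef, Nat.le_add_left, Nat.add_sub_cancel]
  have hsg : Summable g := by
    rw [← summable_nat_add_iff m₀]
    simpa [hg'] using (summable_geometric_two).mul_left c
  have hle : ∀ m : ℕ,
      (if 3 ≤ m ∧ q ^ 2 < (p:ℝ) ^ m then 1 / ((m : ℝ) * (p : ℝ) ^ m) else 0) ≤ g m := by
    intro m
    rw [if_congr (hcond m) rfl rfl]
    by_cases hm : m₀ ≤ m
    · rw [if_pos hm]
      rw [hgdef]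
      simp only [if_pos hm]
      have hm3 : (3:ℝ) ≤ (m:ℝ) := by exact_mod_cast le_trans h3 hm
      have hpow : (p:ℝ) ^ m = P * (p:ℝ) ^ (m - m₀) := by
        rw [hPdef, ← pow_add, Nat.add_sub_cancel' hm]
      have h2pow : (2:ℝ) ^ (m - m₀) ≤ (p:ℝ) ^ (m - m₀) :=
        pow_le_pow_left₀ (by norm_num) hp2 _
      have hrhs : c * (1/2:ℝ) ^ (m - m₀) = 1 / (3 * P * 2 ^ (m - m₀)) := by
        rw [hcdef, one_div_pow, div_mul_div_comm, one_mul, mul_assoc]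
      rw [hrhs]
      apply one_div_le_one_div_of_le
      · positivity
      · rw [hpow]
        have h1 : 3 * P * 2 ^ (m - m₀) ≤ 3 * (P * (p:ℝ) ^ (m - m₀)) := by
          rw [mul_assoc]
          have := mul_le_mul_of_nonneg_left h2pow hP0.le
          nlinarith
        have h2 : 3 * (P * (p:ℝ) ^ (m - m₀)) ≤ (m:ℝ) * (P * (p:ℝ) ^ (m - m₀)) := by
          apply mul_le_mul_of_nonneg_right hm3
          positivity
        linarith
    · rw [if_neg hm, hgdef]
      simp [hm]
  have hsf : Summable
      (fun m : ℕ => if 3 ≤ m ∧ q ^ 2 < (p:ℝ) ^ m then 1 / ((m : ℝ) * (p : ℝ) ^ m) else 0) := by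
    apply Summable.of_nonneg_of_le _ hle hsg
    intro m
    by_cases h : 3 ≤ m ∧ q ^ 2 < (p:ℝ) ^ m
    · rw [if_pos h]; positivity
    · rw [if_neg h]
  have htg : ∑' m, g m = 2 * c := by
    have key := Summable.sum_add_tsum_nat_add m₀ hsg
    have hzero : ∑ i ∈ Finset.range m₀, g i = 0 := by
      apply Finset.sum_eq_zero
      intro i hi
      rw [Finset.mem_range] at hi
      simp [hgdef, Nat.not_le.mpr hi]
    have hshift : ∑' n : ℕ, g (n + m₀) = c * 2 := by
      simp only [hg']
      rw [tsum_mul_left, tsum_geometric_two]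
    rw [hzero, hshift, zero_add] at key
    rw [← key]; ring
  calc (∑' m : ℕ, if 3 ≤ m ∧ q ^ 2 < (p:ℝ) ^ m then 1 / ((m : ℝ) * (p : ℝ) ^ m) else 0)
      ≤ ∑' m, g m := Summable.tsum_le_tsum hle hsf hsg
    _ = 2 * c := htg
    _ < 1 / q ^ 2 := by
        rw [hcdef]
        rw [mul_one_div, div_lt_div_iff₀ (by positivity) (by positivity)]
        nlinarith [hm₀, sq_nonneg q]
end

section
/- For every real x ≥ 0 and every integer m ≥ 3, log(1 + 2/m) ≤ (2/m)·(3m+1)/(3m+4). -/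
/-!
The difference `x (x + 6) / (2 (2x + 3)) - log (1 + x)` vanishes at `0` and has derivative
`x³ / ((1 + x) (2x + 3)²)`, which is nonnegative for `x ≥ 0`. At `x = 2 / m` the rational
function equals `(2 / m) (3m + 1) / (3m + 4)`.
-/

open Real Set

lemma hasDerivAt_pade_sub_log {x : ℝ} (hx : -1 < x) :
    HasDerivAt (fun y => y * (y + 6) / (2 * (2 * y + 3)) - log (1 + y))
      (x ^ 3 / ((1 + x) * (2 * x + 3) ^ 2)) x := by
  have h1 : 1 + x ≠ 0 := by linarith
  have h2 : 2 * x + 3 ≠ 0 := by linarith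
  have hnum : HasDerivAt (fun y => y * (y + 6)) (1 * (x + 6) + x * 1) x :=
    (hasDerivAt_id x).mul ((hasDerivAt_id x).add_const 6)
  have hden : HasDerivAt (fun y => 2 * (2 * y + 3)) (2 * (2 * 1)) x :=
    (((hasDerivAt_id x).const_mul 2).add_const 3).const_mul 2
  have hlog : HasDerivAt (fun y => log (1 + y)) (1 / (1 + x)) x := by
    simpa using ((hasDerivAt_id x).const_add 1).log h1
  refine ((hnum.div hden (by positivity)).sub hlog).congr_deriv ?_
  rw [div_sub_div _ _ (by positivity) h1, div_eq_div_iff (by positivity) (by positivity)]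
  ring

lemma monotoneOn_pade_sub_log :
    MonotoneOn (fun y => y * (y + 6) / (2 * (2 * y + 3)) - log (1 + y)) (Ici 0) := by
  have hderiv : ∀ x ∈ Ici (0 : ℝ), HasDerivAt _ _ x := fun x hx =>
    hasDerivAt_pade_sub_log (by linarith [mem_Ici.mp hx])
  refine monotoneOn_of_hasDerivWithinAt_nonneg (convex_Ici 0)
    (fun x hx => (hderiv x hx).continuousAt.continuousWithinAt)
    (fun x hx => (hderiv x (interior_subset hx)).hasDerivWithinAt) fun x hx => ?_
  have : 0 ≤ x := interior_subset hx
  positivity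

theorem Real.log_one_add_le_pade {x : ℝ} (hx : 0 ≤ x) :
    log (1 + x) ≤ x * (x + 6) / (2 * (2 * x + 3)) := by
  have := monotoneOn_pade_sub_log self_mem_Ici (mem_Ici.mpr hx) hx
  simp only [zero_add, mul_zero, add_zero, log_one, sub_zero] at this
  linarith

theorem log_one_add_two_div_le_general (m : ℕ) :
    Real.log (1 + 2 / (m : ℝ)) ≤ (2 / (m : ℝ)) * ((3 * (m : ℝ) + 1) / (3 * (m : ℝ) + 4)) := by
  refine (log_one_add_le_pade (by positivity)).trans_eq ?_
  rcases eq_or_ne (m : ℝ) 0 with hm | hm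
  · simp [hm]
  · field_simp
    ring

/-- For every integer `m ≥ 3`, `log (1 + 2/m) ≤ (2/m)·(3m+1)/(3m+4)`. -/
theorem log_one_add_two_div_le (m : ℕ) (hm : 3 ≤ m) :
    Real.log (1 + 2 / (m : ℝ)) ≤ (2 / (m : ℝ)) * ((3 * (m : ℝ) + 1) / (3 * (m : ℝ) + 4)) :=
  log_one_add_two_div_le_general m
end

section
/- Let q ≥ 3 be an odd number and b ∈ {−1,1}. Then Σ_{m≥2} (1/m)·Σ_{r=α(m)}^{β(m)} 1/(rq + b) ≤ (1/q)·(43/13 − (18/13)ζ(3)) + C/q² for some absolute constant C > 0, where α(m) = m(m−1)/2 and β(m) = m(m+1)/2 − 1. -/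
/-!
Since `r q + b ≥ r (q - 1)`, the double sum is at most `1 / (q - 1)` times the `q`-free series
`Σ_m (1/m) Σ_{r=α(m)}^{β(m)} 1/r`. Every `r` in the `m`-th block is at least `m (m - 1) / 2`
and the block has `m` elements, so its term is at most `2/(m - 1) - 2/m`; summing the first four
terms exactly and telescoping the rest bounds the series by `1680347/1029600 < 64/39`, while
`ζ(3) ≤ 65/54` gives `64/39 ≤ 43/13 - (18/13) ζ(3)`. Finally `1/(q - 1) ≤ 1/q + 3/(2q²)`
for `q ≥ 3`.
-/

open Filter Topology

lemma summable_and_tsum_le_of_le_sub_succ {f g : ℕ → ℝ} {a : ℝ} (hg : ∀ n, 0 ≤ g n)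
    (hgf : ∀ n, g n ≤ f n - f (n + 1)) (hf : Tendsto f atTop (𝓝 a)) :
    Summable g ∧ ∑' n, g n ≤ f 0 - a := by
  have hdiff : ∀ n, 0 ≤ f n - f (n + 1) := fun n => (hg n).trans (hgf n)
  have htel : HasSum (fun n => f n - f (n + 1)) (f 0 - a) := by
    rw [hasSum_iff_tendsto_nat_of_nonneg hdiff]
    simpa only [Finset.sum_range_sub'] using tendsto_const_nhds.sub hf
  have hsum : Summable g := htel.summable.of_nonneg_of_le hg hgf
  exact ⟨hsum, htel.tsum_eq ▸ hsum.tsum_le_tsum hgf htel.summable⟩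

lemma tendsto_const_div_add_atTop (c k : ℝ) :
    Tendsto (fun n : ℕ => c / ((n : ℝ) + k)) atTop (𝓝 0) :=
  tendsto_const_nhds.div_atTop (tendsto_atTop_add_const_right _ _ tendsto_natCast_atTop_atTop)

-- `1 / k ^ 3 ≤ 1 / ((k - 1) k (k + 1))` at `k = x + 4`, in telescoping form
lemma one_div_pow_three_le_sub (x : ℝ) (hx : 0 ≤ x) :
    1 / (x + 4) ^ 3 ≤ 1 / (2 * (x + 3) * (x + 4)) - 1 / (2 * (x + 4) * (x + 5)) := by
  rw [div_sub_div _ _ (by positivity) (by positivity),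
    div_le_div_iff₀ (by positivity) (by positivity)]
  nlinarith

lemma tsum_one_div_succ_pow_three_le : ∑' n : ℕ, 1 / ((n : ℝ) + 1) ^ 3 ≤ 65 / 54 := by
  have hf :
      Tendsto (fun n : ℕ => 1 / (2 * ((n : ℝ) + 3) * ((n : ℝ) + 4))) atTop (𝓝 0) := by
    refine squeeze_zero (fun n => by positivity) (fun n => ?_) (tendsto_const_div_add_atTop 1 3)
    gcongr
    nlinarith
  obtain ⟨htail, htail_le⟩ := summable_and_tsum_le_of_le_sub_succ
    (g := fun n : ℕ => 1 / (((n + 3 : ℕ) : ℝ) + 1) ^ 3) (fun n => by positivity) (fun n => by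
      have := one_div_pow_three_le_sub n n.cast_nonneg
      push_cast
      ring_nf at this ⊢
      exact this) hf
  have hsum := (summable_nat_add_iff (f := fun n : ℕ => 1 / ((n : ℝ) + 1) ^ 3) 3).mp htail
  rw [← hsum.sum_add_tsum_nat_add 3]
  norm_num [Finset.sum_range_succ] at htail_le ⊢
  linarith

-- The range `α(m + 2) ≤ r ≤ β(m + 2)` of the inner sum, indices shifted so that `m : ℕ`.
def triangularBlock (m : ℕ) : Finset ℕ :=
  Finset.Icc ((m + 2) * (m + 1) / 2) ((m + 2) * (m + 3) / 2 - 1)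

noncomputable def blockAvg (f : ℕ → ℝ) (m : ℕ) : ℝ :=
  1 / ((m : ℝ) + 2) * ∑ r ∈ triangularBlock m, f r

lemma card_triangularBlock (m : ℕ) : (triangularBlock m).card = m + 2 := by
  have h : (m + 2) * (m + 3) = (m + 2) * (m + 1) + 2 * (m + 2) := by ring
  rw [triangularBlock, Nat.card_Icc, h]
  omega

lemma le_two_mul_of_mem_triangularBlock {m r : ℕ} (hr : r ∈ triangularBlock m) :
    (m + 1) * (m + 2) ≤ 2 * r := by
  have heven : 2 ∣ (m + 2) * (m + 1) := by
    rw [mul_comm]; exact (Nat.even_mul_succ_self (m + 1)).two_dvd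
  rw [triangularBlock, Finset.mem_Icc] at hr
  rw [mul_comm]
  generalize (m + 2) * (m + 1) = t at *
  omega

lemma one_le_of_mem_triangularBlock {m r : ℕ} (hr : r ∈ triangularBlock m) : 1 ≤ r := by
  have := le_two_mul_of_mem_triangularBlock hr
  nlinarith

lemma blockAvg_le_of_forall_le {f : ℕ → ℝ} {m : ℕ} {c : ℝ}
    (h : ∀ r ∈ triangularBlock m, f r ≤ c) : blockAvg f m ≤ c := by
  have hsum := Finset.sum_le_card_nsmul _ _ _ h
  rw [card_triangularBlock, nsmul_eq_mul] at hsum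
  rw [blockAvg, one_div_mul_eq_div, div_le_iff₀ (by positivity)]
  push_cast at hsum
  linarith

lemma blockAvg_mono {f g : ℕ → ℝ} {m : ℕ} (h : ∀ r ∈ triangularBlock m, f r ≤ g r) :
    blockAvg f m ≤ blockAvg g m :=
  mul_le_mul_of_nonneg_left (Finset.sum_le_sum h) (by positivity)

lemma blockAvg_nonneg {f : ℕ → ℝ} {m : ℕ} (h : ∀ r ∈ triangularBlock m, 0 ≤ f r) :
    0 ≤ blockAvg f m :=
  mul_nonneg (by positivity) (Finset.sum_nonneg h)

lemma blockAvg_const_mul (c : ℝ) (f : ℕ → ℝ) (m : ℕ) :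
    blockAvg (fun r => c * f r) m = c * blockAvg f m := by
  rw [blockAvg, blockAvg, ← Finset.mul_sum]
  ring

lemma blockAvg_inv_le (m : ℕ) :
    blockAvg (fun r => 1 / (r : ℝ)) m ≤ 2 / ((m : ℝ) + 1) - 2 / ((m : ℝ) + 2) := by
  refine blockAvg_le_of_forall_le fun r hr => ?_
  have hr' : ((m : ℝ) + 1) * ((m : ℝ) + 2) ≤ 2 * r := by
    exact_mod_cast le_two_mul_of_mem_triangularBlock hr
  rw [div_sub_div _ _ (by positivity) (by positivity),
    div_le_div_iff₀ (by nlinarith) (by positivity)]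
  nlinarith

lemma one_div_mul_add_le {r q b : ℝ} (hr : 1 ≤ r) (hq : 1 < q) (hb : -1 ≤ b) :
    1 / (r * q + b) ≤ 1 / (q - 1) * (1 / r) := by
  rw [one_div_mul_one_div]
  exact one_div_le_one_div_of_le (by nlinarith) (by nlinarith)

section

variable {q b : ℝ} (hq : 1 < q) (hb : -1 ≤ b)
include hq hb

lemma blockAvg_one_div_mul_add_nonneg (m : ℕ) :
    0 ≤ blockAvg (fun r => 1 / ((r : ℝ) * q + b)) m :=
  blockAvg_nonneg fun r hr => by
    have : (1 : ℝ) ≤ r := by exact_mod_cast one_le_of_mem_triangularBlock hr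
    exact (one_div_pos.2 (by nlinarith)).le

lemma blockAvg_one_div_mul_add_le (m : ℕ) :
    blockAvg (fun r => 1 / ((r : ℝ) * q + b)) m ≤
      1 / (q - 1) * blockAvg (fun r => 1 / (r : ℝ)) m := by
  rw [← blockAvg_const_mul]
  exact blockAvg_mono fun r hr =>
    one_div_mul_add_le (by exact_mod_cast one_le_of_mem_triangularBlock hr) hq hb

end

lemma summable_and_tsum_blockAvg_inv_le :
    Summable (blockAvg fun r => 1 / (r : ℝ)) ∧
      ∑' m, blockAvg (fun r => 1 / (r : ℝ)) m ≤ 1680347 / 1029600 := by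
  obtain ⟨htail, htail_le⟩ := summable_and_tsum_le_of_le_sub_succ
    (g := fun n => blockAvg (fun r => 1 / (r : ℝ)) (n + 4))
    (f := fun n : ℕ => 2 / ((n : ℝ) + 5))
    (fun n => blockAvg_nonneg fun r _ => by positivity)
    (fun n => by
      have := blockAvg_inv_le (n + 4)
      push_cast at this ⊢
      ring_nf at this ⊢
      exact this)
    (tendsto_const_div_add_atTop 2 5)
  have hsum := (summable_nat_add_iff (f := blockAvg fun r => 1 / (r : ℝ)) 4).mp htail
  have hhead :
      ∑ i ∈ Finset.range 4, blockAvg (fun r => 1 / (r : ℝ)) i = 1268507 / 1029600 := by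
    simp only [Finset.sum_range_succ, Finset.sum_range_zero, blockAvg, triangularBlock]
    norm_num [Finset.sum_Icc_succ_top]
  refine ⟨hsum, ?_⟩
  rw [← hsum.sum_add_tsum_nat_add 4, hhead]
  simp only [Nat.cast_zero, zero_add, sub_zero] at htail_le
  linarith

lemma one_div_sub_one_le {x : ℝ} (hx : 3 ≤ x) : 1 / (x - 1) ≤ 1 / x + 3 / (2 * x ^ 2) := by
  rw [div_add_div _ _ (by positivity) (by positivity),
    div_le_div_iff₀ (by linarith) (by positivity)]
  nlinarith

/-- There is an absolute constant `C > 0` such that for every odd `q ≥ 3` and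
`b ∈ {−1,1}`, `Σ_{m≥2} (1/m)·Σ_{r=α(m)}^{β(m)} 1/(rq+b) ≤ (1/q)(43/13 − (18/13)ζ(3)) + C/q²`,
where `α(m) = m(m−1)/2`, `β(m) = m(m+1)/2 − 1` and `ζ(3) = Σ_{n≥1} 1/n³`. -/
theorem double_sum_le_main_term :
    ∃ C : ℝ, 0 < C ∧ ∀ q : ℕ, 3 ≤ q → Odd q → ∀ b : ℤ, b = -1 ∨ b = 1 →
      ∑' m : ℕ, (1 / ((m : ℝ) + 2)) *
          ∑ r ∈ Finset.Icc ((m + 2) * (m + 1) / 2) ((m + 2) * (m + 3) / 2 - 1),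
            1 / ((r : ℝ) * q + b) ≤
        (1 / (q : ℝ)) * (43 / 13 - (18 / 13) * ∑' n : ℕ, 1 / ((n : ℝ) + 1) ^ 3) +
          C / (q : ℝ) ^ 2 := by
  refine ⟨3, by norm_num, fun q hq _ b hb => ?_⟩
  change ∑' m, blockAvg (fun r => 1 / ((r : ℝ) * q + b)) m ≤ _
  have hq' : (3 : ℝ) ≤ q := by exact_mod_cast hq
  have hb' : (-1 : ℝ) ≤ b := by rcases hb with rfl | rfl <;> norm_num
  have hq1 : (1 : ℝ) < q := by linarith
  have hterm := blockAvg_one_div_mul_add_le hq1 hb'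
  obtain ⟨hS, hS_le⟩ := summable_and_tsum_blockAvg_inv_le
  have hζ := tsum_one_div_succ_pow_three_le
  calc ∑' m, blockAvg (fun r => 1 / ((r : ℝ) * q + b)) m
      ≤ 1 / ((q : ℝ) - 1) * ∑' m, blockAvg (fun r => 1 / (r : ℝ)) m := by
        rw [← tsum_mul_left]
        exact (hS.mul_left _).of_nonneg_of_le (blockAvg_one_div_mul_add_nonneg hq1 hb') hterm
          |>.tsum_le_tsum hterm (hS.mul_left _)
    _ ≤ (1 / q + 3 / (2 * (q : ℝ) ^ 2)) * (1680347 / 1029600) :=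
        mul_le_mul (one_div_sub_one_le hq') hS_le (tsum_nonneg fun m =>
          blockAvg_nonneg fun r _ => by positivity) (by positivity)
    _ ≤ _ := by
        rw [add_mul]
        gcongr ?_ + ?_
        · exact mul_le_mul_of_nonneg_left (by linarith) (by positivity)
        · rw [div_mul_eq_mul_div, div_le_div_iff₀ (by positivity) (by positivity)]
          nlinarith
end
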